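/- For γ > 1/ℓ (and b arbitrarily small), the configuration in which each of ℓ agents holds a single event inviting all other ℓ−1 agents at rate 1/ℓ is a Nash equilibrium of the social-event game restricted to these ℓ agents, and it supports the complete graph K_ℓ: every pair has meeting rate exactly 1, each agent's invitation rate 1/ℓ toward each neighbor is strictly below γ, and any unilateral rate reduction by an agent destroys all of his connections since each pairwise meeting rate is exactly at threshold. -/

import Mathlib

open Finset

/-- An event configuration: each agent holds a finite list of events,
each event being a set of attendees together with a rate. -/
abbrev Config (V : Type*) := V → List (Finset V × ℝ)

section Game

variable {V : Type*} [Fintype V] [DecidableEq V]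

/-- A valid strategy for `v`: every event contains `v` and has positive rate. -/
def ValidStrategy (v : V) (s : List (Finset V × ℝ)) : Prop :=
  ∀ e ∈ s, v ∈ e.1 ∧ 0 < e.2

def ConfigValid (cfg : Config V) : Prop := ∀ v, ValidStrategy v (cfg v)

/-- The meeting rate between `u` and `v` supported by `w` (rate of events held by `w`
attended by both `u` and `v`). -/
def rateBy (cfg : Config V) (w u v : V) : ℝ :=
  ((cfg w).map (fun e => if u ∈ e.1 ∧ v ∈ e.1 then e.2 else 0)).sum

/-- The total meeting rate between `u` and `v`. -/
def meet (cfg : Config V) (u v : V) : ℝ := ∑ w, rateBy cfg w u v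

/-- `u` and `v` are connected when their meeting rate is at least the threshold `1`. -/
def connected (cfg : Config V) (u v : V) : Prop := u ≠ v ∧ 1 ≤ meet cfg u v

open scoped Classical in
/-- The set of agents connected to `v`. -/
noncomputable def nbrs (cfg : Config V) (v : V) : Finset V :=
  univ.filter (fun u => connected cfg u v)

/-- The cost of strategy `s` for agent `v` with parameters `b, c`. -/
def stratCost (b c : ℝ) (v : V) (s : List (Finset V × ℝ)) : ℝ :=
  (s.map (fun e => e.2 * (c * ((e.1.erase v).card : ℝ) + b))).sum

/-- Utility of agent `v`: benefit `a` per connection minus cost of own events. -/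
noncomputable def utility (a b c : ℝ) (cfg : Config V) (v : V) : ℝ :=
  a * ((nbrs cfg v).card : ℝ) - stratCost b c v (cfg v)

/-- A configuration is stable when it is valid and is a Nash equilibrium:
no agent can strictly improve her utility by a unilateral change of strategy. -/
def Stable (a b c : ℝ) (cfg : Config V) : Prop :=
  ConfigValid cfg ∧ ∀ v (s : List (Finset V × ℝ)), ValidStrategy v s →
    utility a b c (Function.update cfg v s) v ≤ utility a b c cfg v

/-- A configuration supports the graph `G` when adjacency coincides with connection. -/
def Supports (cfg : Config V) (G : SimpleGraph V) : Prop :=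
  ∀ u v, G.Adj u v ↔ connected cfg u v

end Game

/-!
Write `n` for the number of agents and `r = 1/n`. If agent `v` deviates to `s`, every other pair
still meets through the other `n - 1` events, so `u` stays connected to `v` iff `v`'s new events
invite `u` at total rate at least `r`. Keeping `k` connections therefore costs at least `c k r`
plus `b` times the total rate `T`, so the deviation yields at most `(a - c r) k - b T`. Keeping
all `n - 1` connections forces `T ≥ r`, which is what the clique already pays; dropping one loses
`a - c r`, which exceeds the saving `b r` as soon as `b < n a - c`, a positive bound since
`γ > 1/n`.
-/

section Invitations

variable {V : Type*} [DecidableEq V]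

def inviteRate (s : List (Finset V × ℝ)) (u : V) : ℝ :=
  (s.map fun e => if u ∈ e.1 then e.2 else 0).sum

def totalRate (s : List (Finset V × ℝ)) : ℝ := (s.map Prod.snd).sum

lemma inviteRate_nonneg {v : V} {s : List (Finset V × ℝ)} (hs : ValidStrategy v s) (u : V) :
    0 ≤ inviteRate s u :=
  List.sum_nonneg fun _ hx => by
    obtain ⟨e, he, rfl⟩ := List.mem_map.mp hx
    split_ifs
    exacts [(hs e he).2.le, le_rfl]

lemma inviteRate_le_totalRate {v : V} {s : List (Finset V × ℝ)} (hs : ValidStrategy v s)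
    (u : V) : inviteRate s u ≤ totalRate s :=
  List.sum_le_sum fun e he => by
    split_ifs
    exacts [le_rfl, (hs e he).2.le]

lemma rateBy_self_right {cfg : Config V} {v : V} (hv : ValidStrategy v (cfg v)) (u : V) :
    rateBy cfg v u v = inviteRate (cfg v) u := by
  unfold rateBy inviteRate
  congr 1
  exact List.map_congr_left fun e he => by simp [(hv e he).1]

end Invitations

section Clique

variable {V : Type*} [Fintype V] [DecidableEq V]

variable (V) in
def uniformConfig (r : ℝ) : Config V := fun _ => [(univ, r)]

lemma stratCost_eq_sum_inviteRate (b c : ℝ) (v : V) (s : List (Finset V × ℝ)) :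
    stratCost b c v s = c * ∑ u ∈ univ.erase v, inviteRate s u + b * totalRate s := by
  induction s with
  | nil => simp [stratCost, inviteRate, totalRate]
  | cons e s ih =>
    simp only [stratCost, inviteRate, totalRate, List.map_cons, List.sum_cons,
      sum_add_distrib] at ih ⊢
    have hattend : ∑ u ∈ univ.erase v, (if u ∈ e.1 then e.2 else 0) = e.2 * #(e.1.erase v) := by
      rw [sum_ite_mem, erase_inter, univ_inter, sum_const, nsmul_eq_mul, mul_comm]
    rw [ih, hattend]
    ring

lemma meet_update_eq {cfg : Config V} {v : V} {s : List (Finset V × ℝ)} (hs : ValidStrategy v s)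
    (u : V) :
    meet (Function.update cfg v s) u v = ∑ w ∈ univ.erase v, rateBy cfg w u v + inviteRate s u := by
  rw [meet, ← sum_erase_add _ _ (mem_univ v), rateBy_self_right (by simpa using hs),
    Function.update_self]
  congr 1
  refine sum_congr rfl fun w hw => ?_
  rw [rateBy, rateBy, Function.update_of_ne (ne_of_mem_erase hw)]

lemma rateBy_uniformConfig (r : ℝ) (w u v : V) : rateBy (uniformConfig V r) w u v = r := by
  simp [rateBy, uniformConfig]

lemma meet_uniformConfig (r : ℝ) (u v : V) :
    meet (uniformConfig V r) u v = Fintype.card V * r := by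
  simp [meet, rateBy_uniformConfig]

omit [DecidableEq V] in
lemma configValid_uniformConfig {r : ℝ} (hr : 0 < r) : ConfigValid (uniformConfig V r) := by
  intro v e he
  obtain rfl := List.mem_singleton.mp he
  exact ⟨mem_univ v, hr⟩

lemma nbrs_subset_erase (cfg : Config V) (v : V) : nbrs cfg v ⊆ univ.erase v := by
  classical
  intro u hu
  rw [nbrs, mem_filter_univ] at hu
  exact mem_erase.mpr ⟨hu.1, mem_univ u⟩

lemma nbrs_uniformConfig {r : ℝ} (hr : Fintype.card V * r = 1) (v : V) :
    nbrs (uniformConfig V r) v = univ.erase v := by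
  ext u
  simp [nbrs, connected, meet_uniformConfig, hr]

lemma utility_uniformConfig {r : ℝ} (hr : Fintype.card V * r = 1) (a b c : ℝ) (v : V) :
    utility a b c (uniformConfig V r) v = (a - c * r) * (Fintype.card V - 1) - b * r := by
  simp only [utility, nbrs_uniformConfig hr, stratCost, uniformConfig, List.map_cons, List.map_nil,
    List.sum_cons, List.sum_nil, cast_card_erase_of_mem (mem_univ v), card_univ]
  ring

lemma mem_nbrs_update_uniformConfig {r : ℝ} (hr : Fintype.card V * r = 1) {v : V}
    {s : List (Finset V × ℝ)} (hs : ValidStrategy v s) (u : V) :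
    u ∈ nbrs (Function.update (uniformConfig V r) v s) v ↔ u ≠ v ∧ r ≤ inviteRate s u := by
  have hmeet : meet (Function.update (uniformConfig V r) v s) u v = 1 - r + inviteRate s u := by
    rw [meet_update_eq hs, sum_congr rfl fun w _ => rateBy_uniformConfig r w u v, sum_const,
      nsmul_eq_mul, cast_card_erase_of_mem (mem_univ v), card_univ]
    linear_combination hr
  classical
  rw [nbrs, mem_filter_univ, connected, hmeet]
  constructor <;> rintro ⟨huv, h⟩ <;> exact ⟨huv, by linarith⟩

lemma utility_update_uniformConfig_le {r : ℝ} (hr : Fintype.card V * r = 1) {a b c : ℝ}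
    (hc : 0 ≤ c) {v : V} {s : List (Finset V × ℝ)} (hs : ValidStrategy v s) :
    utility a b c (Function.update (uniformConfig V r) v s) v ≤
      (a - c * r) * #(nbrs (Function.update (uniformConfig V r) v s) v) - b * totalRate s := by
  set N := nbrs (Function.update (uniformConfig V r) v s) v
  have hcost : #N * r ≤ ∑ u ∈ univ.erase v, inviteRate s u :=
    calc #N * r ≤ ∑ u ∈ N, inviteRate s u := by
          rw [← nsmul_eq_mul]
          exact card_nsmul_le_sum _ _ _ fun u hu =>
            ((mem_nbrs_update_uniformConfig hr hs u).mp hu).2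
      _ ≤ ∑ u ∈ univ.erase v, inviteRate s u :=
          sum_le_sum_of_subset_of_nonneg (nbrs_subset_erase _ v) fun u _ _ => inviteRate_nonneg hs u
  rw [utility, Function.update_self, stratCost_eq_sum_inviteRate]
  nlinarith [mul_le_mul_of_nonneg_left hcost hc]

theorem uniformConfig_stable (hV : 2 ≤ Fintype.card V) {a b c : ℝ} (hc : 0 ≤ c) (hb : 0 < b)
    (hbc : b < Fintype.card V * a - c) :
    Stable a b c (uniformConfig V (1 / Fintype.card V)) := by
  set r : ℝ := 1 / Fintype.card V
  have hr : Fintype.card V * r = 1 := mul_one_div_cancel (by positivity)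
  have hr0 : 0 < r := by positivity
  have hgain : b * r < a - c * r := by
    calc b * r < (Fintype.card V * a - c) * r := mul_lt_mul_of_pos_right hbc hr0
      _ = a - c * r := by rw [sub_mul, mul_right_comm, hr, one_mul]
  refine ⟨configValid_uniformConfig hr0, fun v s hs => ?_⟩
  rw [utility_uniformConfig hr]
  refine (utility_update_uniformConfig_le hr hc hs).trans ?_
  set N := nbrs (Function.update (uniformConfig V r) v s) v
  have hN : #N ≤ Fintype.card V - 1 :=
    (card_le_card (nbrs_subset_erase _ v)).trans_eq (card_erase_of_mem (mem_univ v))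
  rcases hN.eq_or_lt with hall | hdrop
  · obtain ⟨u, hu⟩ : N.Nonempty := card_pos.mp (by omega)
    have hT : r ≤ totalRate s :=
      ((mem_nbrs_update_uniformConfig hr hs u).mp hu).2.trans (inviteRate_le_totalRate hs u)
    rw [hall, Nat.cast_pred (by omega)]
    nlinarith
  · have hk : (#N : ℝ) ≤ Fintype.card V - 2 := by
      have : #N + 2 ≤ Fintype.card V := by omega
      exact le_sub_iff_add_le.mpr (by exact_mod_cast this)
    have hT : 0 ≤ totalRate s := (inviteRate_nonneg hs v).trans (inviteRate_le_totalRate hs v)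
    nlinarith [mul_le_mul_of_nonneg_left hk ((mul_pos hb hr0).le.trans hgain.le),
      mul_nonneg hb.le hT]

end Clique

theorem clique_configuration_stable_general {V : Type*} [Fintype V] [DecidableEq V]
    (ℓ : ℕ) (hℓ : 2 ≤ ℓ) (hcard : Fintype.card V = ℓ)
    (a c : ℝ) (hc : 0 < c) (hγ : 1 / (ℓ : ℝ) < a / c) :
    ∃ b₀ > (0 : ℝ), ∀ b : ℝ, 0 < b → b < b₀ →
      Stable a b c (fun _ : V => [(Finset.univ, 1 / (ℓ : ℝ))]) ∧
      (∀ u v : V, u ≠ v → meet (fun _ : V => [(Finset.univ, 1 / (ℓ : ℝ))]) u v = 1) ∧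
      (∀ u v : V, u ≠ v → connected (fun _ : V => [(Finset.univ, 1 / (ℓ : ℝ))]) u v) ∧
      (∀ u v : V, u ≠ v →
        rateBy (fun _ : V => [(Finset.univ, 1 / (ℓ : ℝ))]) v v u = 1 / (ℓ : ℝ) ∧
        1 / (ℓ : ℝ) < a / c) := by
  subst hcard
  have hn : (0 : ℝ) < Fintype.card V := by positivity
  have hr : (Fintype.card V : ℝ) * (1 / Fintype.card V) = 1 := mul_one_div_cancel hn.ne'
  have hmeet (u v : V) : meet (uniformConfig V (1 / Fintype.card V)) u v = 1 :=
    (meet_uniformConfig _ u v).trans hr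
  refine ⟨Fintype.card V * a - c, ?_, fun b hb hbc => ⟨uniformConfig_stable hℓ hc.le hb hbc,
    fun u v _ => hmeet u v, fun u v huv => ⟨huv, (hmeet u v).ge⟩,
    fun u v _ => ⟨rateBy_uniformConfig _ v v u, hγ⟩⟩⟩
  rw [div_lt_div_iff₀ hn hc, one_mul] at hγ
  linarith

/-- For `γ = a/c > 1/ℓ` and `b` sufficiently small, the configuration in
which each of the `ℓ` agents holds a single event inviting everyone at rate `1/ℓ` is a Nash
equilibrium supporting the complete graph `K_ℓ`: every pair meets at rate exactly `1`, and
every invitation rate `1/ℓ` is strictly below `γ`. -/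
theorem clique_configuration_stable {V : Type*} [Fintype V] [DecidableEq V]
    (ℓ : ℕ) (hℓ : 2 ≤ ℓ) (hcard : Fintype.card V = ℓ)
    (a c : ℝ) (ha : 0 < a) (hc : 0 < c) (hγ : 1 / (ℓ : ℝ) < a / c) :
    ∃ b₀ > (0 : ℝ), ∀ b : ℝ, 0 < b → b < b₀ →
      Stable a b c (fun _ : V => [(Finset.univ, 1 / (ℓ : ℝ))]) ∧
      (∀ u v : V, u ≠ v → meet (fun _ : V => [(Finset.univ, 1 / (ℓ : ℝ))]) u v = 1) ∧
      (∀ u v : V, u ≠ v → connected (fun _ : V => [(Finset.univ, 1 / (ℓ : ℝ))]) u v) ∧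
      (∀ u v : V, u ≠ v →
        rateBy (fun _ : V => [(Finset.univ, 1 / (ℓ : ℝ))]) v v u = 1 / (ℓ : ℝ) ∧
        1 / (ℓ : ℝ) < a / c) :=
  clique_configuration_stable_general ℓ hℓ hcard a c hc hγ
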